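/- arXiv:1402.2762 — 10 statements merged into one kernel-verified Lean document; each statement's English description precedes it below -/
import Mathlib

section
/- Let P be a closed subsemigroup of a locally compact group G containing the identity. Then G = PP⁻¹ if and only if P generates G and for all a, b ∈ P the intersection aP ∩ bP is nonempty. -/
open Pointwise

/-! `P P⁻¹` is a subgroup as soon as `P` satisfies the right Ore condition `aP ∩ bP ≠ ∅`, since
`b⁻¹ c = p q⁻¹` whenever `b p = c q`; a subgroup containing `P` is everything once `P` generates
`G`. Conversely, writing `a⁻¹ b = p q⁻¹` gives `a p = b q`. -/

namespace Set

variable {G : Type*} [Group G]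

theorem mem_mul_inv_self_iff {s : Set G} {x : G} :
    x ∈ s * s⁻¹ ↔ ∃ a ∈ s, ∃ b ∈ s, a * b⁻¹ = x := by
  constructor
  · rintro ⟨a, ha, b, hb, rfl⟩
    exact ⟨a, ha, b⁻¹, hb, by rw [inv_inv]⟩
  · rintro ⟨a, ha, b, hb, rfl⟩
    exact ⟨a, ha, b⁻¹, by rwa [mem_inv, inv_inv], rfl⟩

theorem smul_inter_smul_nonempty_of_mul_inv_eq_univ {s : Set G} (h : s * s⁻¹ = univ) (a b : G) :
    (a • s ∩ b • s).Nonempty := by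
  obtain ⟨p, hp, q, hq, hpq⟩ := mem_mul_inv_self_iff.mp (h.symm ▸ mem_univ (a⁻¹ * b))
  refine ⟨a * p, smul_mem_smul_set hp, ?_⟩
  have hapq : a * p = b * q :=
    calc a * p = a * (p * q⁻¹) * q := by group
      _ = b * q := by rw [hpq]; group
  exact hapq ▸ smul_mem_smul_set hq

end Set

theorem Subgroup.closure_eq_top_of_mul_inv_eq_univ {G : Type*} [Group G] {s : Set G}
    (h : s * s⁻¹ = Set.univ) : Subgroup.closure s = ⊤ := by
  refine eq_top_iff.mpr fun x _ => ?_
  obtain ⟨a, ha, b, hb, rfl⟩ := Set.mem_mul_inv_self_iff.mp (h.symm ▸ Set.mem_univ x)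
  exact mul_mem (subset_closure ha) (inv_mem (subset_closure hb))

namespace Submonoid

variable {G : Type*} [Group G]

def mulInvSubgroup (S : Submonoid G)
    (hS : ∀ a ∈ S, ∀ b ∈ S, (a • (S : Set G) ∩ b • (S : Set G)).Nonempty) : Subgroup G where
  carrier := S * (S : Set G)⁻¹
  one_mem' := Set.mem_mul_inv_self_iff.mpr ⟨1, S.one_mem, 1, S.one_mem, mul_inv_cancel 1⟩
  inv_mem' := by
    intro x hx
    obtain ⟨a, ha, b, hb, rfl⟩ := Set.mem_mul_inv_self_iff.mp hx
    exact Set.mem_mul_inv_self_iff.mpr ⟨b, hb, a, ha, by group⟩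
  mul_mem' := by
    intro x y hx hy
    obtain ⟨a, ha, b, hb, rfl⟩ := Set.mem_mul_inv_self_iff.mp hx
    obtain ⟨c, hc, d, hd, rfl⟩ := Set.mem_mul_inv_self_iff.mp hy
    obtain ⟨z, ⟨p, hp, rfl⟩, ⟨q, hq, hpq⟩⟩ := hS b hb c hc
    have hbc : b⁻¹ * c = p * q⁻¹ := by
      simp only [smul_eq_mul] at hpq
      rw [eq_mul_inv_iff_mul_eq, mul_assoc, hpq, inv_mul_cancel_left]
    refine Set.mem_mul_inv_self_iff.mpr ⟨a * p, S.mul_mem ha hp, d * q, S.mul_mem hd hq, ?_⟩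
    calc a * p * (d * q)⁻¹ = a * (p * q⁻¹) * d⁻¹ := by group
      _ = a * b⁻¹ * (c * d⁻¹) := by rw [← hbc]; group

theorem mul_inv_eq_univ_of_closure_eq_top (S : Submonoid G)
    (hS : ∀ a ∈ S, ∀ b ∈ S, (a • (S : Set G) ∩ b • (S : Set G)).Nonempty)
    (hgen : Subgroup.closure (S : Set G) = ⊤) : (S : Set G) * (S : Set G)⁻¹ = Set.univ := by
  have hle : Subgroup.closure (S : Set G) ≤ S.mulInvSubgroup hS :=
    (Subgroup.closure_le _).mpr fun x hx =>
      Set.mem_mul_inv_self_iff.mpr ⟨x, hx, 1, S.one_mem, by rw [inv_one, mul_one]⟩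
  exact Set.eq_univ_of_forall fun x => hle (hgen ▸ Subgroup.mem_top x)

end Submonoid

theorem stmt0_general {G : Type*} [Group G]
    (P : Set G) (hP_one : (1 : G) ∈ P)
    (hP_mul : ∀ a ∈ P, ∀ b ∈ P, a * b ∈ P) :
    P * P⁻¹ = Set.univ ↔
      (Subgroup.closure P = ⊤ ∧ ∀ a ∈ P, ∀ b ∈ P, (a • P ∩ b • P).Nonempty) := by
  let S : Submonoid G := ⟨⟨P, fun {a b} ha hb => hP_mul a ha b hb⟩, hP_one⟩
  refine ⟨fun h => ⟨Subgroup.closure_eq_top_of_mul_inv_eq_univ h,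
      fun a _ b _ => Set.smul_inter_smul_nonempty_of_mul_inv_eq_univ h a b⟩,
    fun ⟨hgen, hore⟩ => S.mul_inv_eq_univ_of_closure_eq_top hore hgen⟩

/-- Let `P` be a closed subsemigroup of a locally compact group `G` containing the identity.
Then `G = P * P⁻¹` iff `P` generates `G` and for all `a b ∈ P`, `aP ∩ bP ≠ ∅`. -/
theorem stmt0 {G : Type*} [Group G] [TopologicalSpace G] [IsTopologicalGroup G]
    [LocallyCompactSpace G] [T2Space G] [SecondCountableTopology G]
    (P : Set G) (hP_closed : IsClosed P) (hP_one : (1 : G) ∈ P)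
    (hP_mul : ∀ a ∈ P, ∀ b ∈ P, a * b ∈ P) :
    P * P⁻¹ = Set.univ ↔
      (Subgroup.closure P = ⊤ ∧ ∀ a ∈ P, ∀ b ∈ P, (a • P ∩ b • P).Nonempty) :=
  stmt0_general P hP_one hP_mul
end

section
/- Let G be a topological group and P ⊆ G a closed subsemigroup with e ∈ P such that G = PP⁻¹ and Int(P) is dense in P. Then Int(P) is nonempty and G = Int(P)·Int(P)⁻¹. -/
open Pointwise Set

/-! An interior point `u` of `P` exists because `1 ∈ P ⊆ closure (interior P)`. Left translates of
`interior P` by elements of `P` are open subsets of `P`, so `P u ⊆ Int(P)`, and every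
`a b⁻¹ ∈ P P⁻¹` equals `(a u) (b u)⁻¹ ∈ Int(P) Int(P)⁻¹`. -/

theorem mul_inv_eq_univ_of_forall_mul_mem {G : Type*} [Group G] {S T : Set G}
    (hS : S * S⁻¹ = univ) {u : G} (hu : ∀ a ∈ S, a * u ∈ T) : T * T⁻¹ = univ := by
  refine eq_univ_of_forall fun g => ?_
  obtain ⟨a, ha, b, hb, rfl⟩ : g ∈ S * S⁻¹ := hS ▸ mem_univ g
  refine ⟨a * u, hu a ha, (b⁻¹ * u)⁻¹, inv_mem_inv.2 (hu _ hb), ?_⟩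
  group

theorem mul_mem_interior_of_mul_subset {G : Type*} [Group G] [TopologicalSpace G]
    [ContinuousConstSMul G G] {P : Set G} (hP : P * P ⊆ P) {a u : G} (ha : a ∈ P)
    (hu : u ∈ interior P) : a * u ∈ interior P :=
  interior_mono hP (subset_interior_mul_right (mul_mem_mul ha hu))

theorem stmt2_general {G : Type*} [Group G] [TopologicalSpace G] [IsTopologicalGroup G]
    (P : Set G) (hP_one : (1 : G) ∈ P)
    (hP_mul : ∀ a ∈ P, ∀ b ∈ P, a * b ∈ P)
    (hOre : P * P⁻¹ = Set.univ)
    (hdense : P ⊆ closure (interior P)) :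
    (interior P).Nonempty ∧ interior P * (interior P)⁻¹ = Set.univ := by
  obtain ⟨u, hu⟩ : (interior P).Nonempty := closure_nonempty_iff.mp ⟨1, hdense hP_one⟩
  exact ⟨⟨u, hu⟩, mul_inv_eq_univ_of_forall_mul_mem hOre fun a ha =>
    mul_mem_interior_of_mul_subset (mul_subset_iff.2 hP_mul) ha hu⟩

/-- If `P` is a closed subsemigroup of a locally compact group `G` with `1 ∈ P`, `G = PP⁻¹` and
`Int(P)` dense in `P`, then `Int(P)` is nonempty and `G = Int(P) * Int(P)⁻¹`. -/
theorem stmt2 {G : Type*} [Group G] [TopologicalSpace G] [IsTopologicalGroup G]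
    [LocallyCompactSpace G] [T2Space G] [SecondCountableTopology G]
    (P : Set G) (hP_closed : IsClosed P) (hP_one : (1 : G) ∈ P)
    (hP_mul : ∀ a ∈ P, ∀ b ∈ P, a * b ∈ P)
    (hOre : P * P⁻¹ = Set.univ)
    (hdense : P ⊆ closure (interior P)) :
    (interior P).Nonempty ∧ interior P * (interior P)⁻¹ = Set.univ :=
  stmt2_general P hP_one hP_mul hOre hdense
end

section
/- Let G be a locally compact group and P a closed subsemigroup with e ∈ P, G = PP⁻¹, and Int(P) dense in P. Then the linear span of the set of convolutions ψ * φ, with ψ ∈ L¹(P) and φ ∈ L¹(P⁻¹) both compactly supported, is dense in L¹(G). -/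
/-!
Since `P * Int P ⊆ Int P` and `Int P` is nonempty, the Ore condition `G = P P⁻¹` upgrades to
`G = Int(P) Int(P)⁻¹`, so the open sets `p Int(P)⁻¹` with `p ∈ Int P` cover `G`. Approximate `f`
in `L¹` by a continuous compactly supported `g` and cut `g` by a partition of unity into pieces `gᵢ`
supported in `pᵢ Int(P)⁻¹`. Each piece is close to `ψ * φ`, where `φ = gᵢ(pᵢ ·)` lives on `P⁻¹`
and `ψ ≥ 0` is a bump of mass one in `Int P` concentrated near `pᵢ`: since
`(ψ * φ)(x) = ∫ ψ(t) gᵢ((pᵢ t⁻¹) x) dt` with `pᵢ t⁻¹` close to `1` on the support of `ψ`, uniform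
continuity of `gᵢ` makes the error uniformly small, and it is supported in a compact set fixed in
advance.
-/

open MeasureTheory Pointwise Function Set Filter Topology

theorem HasCompactSupport.exists_nhds_one_dist_mul_lt {G E : Type*} [Group G]
    [TopologicalSpace G] [IsTopologicalGroup G] [PseudoMetricSpace E] [Zero E] {g : G → E}
    (hg : Continuous g) (hgc : HasCompactSupport g) {δ : ℝ} (hδ : 0 < δ) :
    ∃ V ∈ 𝓝 (1 : G), ∀ v ∈ V, ∀ x, dist (g (v * x)) (g x) < δ := by
  -- in the right uniformity, `x` and `v * x` are close exactly when `v` is close to `1`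
  let := IsTopologicalGroup.rightUniformSpace G
  obtain ⟨V, hV, hVsub⟩ := mem_comap.mp (hgc.uniformContinuous_of_continuous hg
    (Metric.dist_mem_uniformity hδ))
  refine ⟨V, hV, fun v hv x => ?_⟩
  rw [dist_comm]
  exact @hVsub (x, v * x) (by simpa using hv)

theorem HasCompactSupport.exists_sum_eq_of_subset_iUnion {X ι : Type*} [TopologicalSpace X]
    [LocallyCompactSpace X] [T2Space X] [Fintype ι] {g : X → ℝ} (hg : Continuous g)
    (hgc : HasCompactSupport g) {U : ι → Set X} (hU : ∀ i, IsOpen (U i))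
    (hcover : tsupport g ⊆ ⋃ i, U i) :
    ∃ g' : ι → X → ℝ, (∀ i, Continuous (g' i)) ∧ (∀ i, HasCompactSupport (g' i)) ∧
      (∀ i, support (g' i) ⊆ U i) ∧ ∑ i, g' i = g := by
  obtain ⟨ρ, hρU, -⟩ := PartitionOfUnity.exists_isSubordinate_of_locallyFinite_t2space hgc U hU
    (locallyFinite_of_finite U) hcover
  refine ⟨fun i x => ρ i x * g x, fun i => (ρ i).continuous.mul hg, fun i => hgc.mul_left,
    fun i => (support_mul_subset_left _ _).trans (subset_tsupport _ |>.trans (hρU i)), ?_⟩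
  ext x
  rw [Finset.sum_apply, ← Finset.sum_mul]
  by_cases hx : x ∈ tsupport g
  · rw [← finsum_eq_sum_of_fintype, ρ.sum_eq_one hx, one_mul]
  · rw [image_eq_zero_of_notMem_tsupport hx, mul_zero]

theorem mul_mem_interior_of_mem {G : Type*} [Group G] [TopologicalSpace G]
    [IsTopologicalGroup G] {P : Set G} (hP_mul : ∀ a ∈ P, ∀ b ∈ P, a * b ∈ P) {a b : G}
    (ha : a ∈ P) (hb : b ∈ interior P) : a * b ∈ interior P := by
  have hsub : a • P ⊆ P := by
    rintro _ ⟨c, hc, rfl⟩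
    exact hP_mul a ha c hc
  exact interior_mono hsub (by rw [interior_smul]; exact smul_mem_smul_set hb)

theorem interior_mul_inv_interior_eq_univ {G : Type*} [Group G] [TopologicalSpace G]
    [IsTopologicalGroup G] {P : Set G} (hP_mul : ∀ a ∈ P, ∀ b ∈ P, a * b ∈ P)
    (hOre : P * P⁻¹ = univ) (hP : (interior P).Nonempty) :
    interior P * (interior P)⁻¹ = univ := by
  obtain ⟨s, hs⟩ := hP
  refine eq_univ_of_forall fun x => ?_
  obtain ⟨a, ha, b, hb, rfl⟩ := mem_mul.mp (hOre.symm ▸ mem_univ x : x ∈ P * P⁻¹)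
  refine ⟨a * s, mul_mem_interior_of_mem hP_mul ha hs, (b⁻¹ * s)⁻¹,
    inv_mem_inv.mpr (mul_mem_interior_of_mem hP_mul hb hs), by group⟩

theorem exists_continuous_integral_eq_one {X : Type*} [TopologicalSpace X] [RegularSpace X]
    [LocallyCompactSpace X] [MeasurableSpace X] [OpensMeasurableSpace X] (μ : Measure X)
    [IsFiniteMeasureOnCompacts μ] [μ.IsOpenPosMeasure] {Ω : Set X} (hΩ : IsOpen Ω)
    (hne : Ω.Nonempty) :
    ∃ ψ : X → ℝ, Continuous ψ ∧ HasCompactSupport ψ ∧ support ψ ⊆ Ω ∧ (∀ x, 0 ≤ ψ x) ∧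
      ∫ x, ψ x ∂μ = 1 := by
  obtain ⟨p, hp⟩ := hne
  obtain ⟨ψ, hψp, hψΩ, hψc, hψ01⟩ := exists_continuous_one_zero_of_isCompact
    isCompact_singleton hΩ.isClosed_compl (disjoint_singleton_left.mpr (not_not.mpr hp))
  have hsupp : support ψ ⊆ Ω := fun x hx => by_contra fun h => hx (hψΩ h)
  have hpos : 0 < ∫ x, ψ x ∂μ := by
    rw [integral_pos_iff_support_of_nonneg (fun x => (hψ01 x).1)
      (ψ.continuous.integrable_of_hasCompactSupport hψc)]
    exact ψ.continuous.isOpen_support.measure_pos μ ⟨p, by simp [hψp rfl]⟩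
  refine ⟨fun x => (∫ y, ψ y ∂μ)⁻¹ * ψ x, continuous_const.mul ψ.continuous, hψc.mul_left,
    (support_mul_subset_right _ _).trans hsupp,
    fun x => mul_nonneg (inv_nonneg.mpr hpos.le) (hψ01 x).1, ?_⟩
  rw [integral_const_mul, inv_mul_cancel₀ hpos.ne']

theorem abs_sub_integral_mul_le {α : Type*} [MeasurableSpace α] {μ : Measure α}
    {ψ F : α → ℝ} {c δ : ℝ} (hψ0 : ∀ t, 0 ≤ ψ t) (hψ1 : ∫ t, ψ t ∂μ = 1)
    (hψF : Integrable (fun t => ψ t * F t) μ) (hF : ∀ t, ψ t ≠ 0 → |c - F t| ≤ δ) :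
    |c - ∫ t, ψ t * F t ∂μ| ≤ δ := by
  have hψ : Integrable ψ μ := .of_integral_ne_zero (by simp [hψ1])
  have hdiff : ∫ t, ψ t * (c - F t) ∂μ = c - ∫ t, ψ t * F t ∂μ := by
    simp_rw [mul_sub]
    rw [integral_sub (hψ.mul_const c) hψF, integral_mul_const, hψ1, one_mul]
  calc |c - ∫ t, ψ t * F t ∂μ| = ‖∫ t, ψ t * (c - F t) ∂μ‖ := by
        rw [hdiff, Real.norm_eq_abs]
    _ ≤ ∫ t, ψ t * δ ∂μ := by
        refine norm_integral_le_of_norm_le (hψ.mul_const δ) (ae_of_all _ fun t => ?_)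
        rw [Real.norm_eq_abs, abs_mul, abs_of_nonneg (hψ0 t)]
        by_cases ht : ψ t = 0
        · simp [ht]
        · exact mul_le_mul_of_nonneg_left (hF t ht) (hψ0 t)
    _ = δ := by rw [integral_mul_const, hψ1, one_mul]

theorem integral_abs_le_of_abs_le_of_support_subset {α : Type*} [MeasurableSpace α]
    {μ : Measure α} {u : α → ℝ} {K : Set α} {c : ℝ} (hK : μ K < ⊤) (hu : ∀ x, |u x| ≤ c)
    (hsupp : support u ⊆ K) : ∫ x, |u x| ∂μ ≤ c * μ.real K := by
  rw [← setIntegral_eq_integral_of_forall_compl_eq_zero fun x hx => by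
    rw [notMem_support.mp (fun h => hx (hsupp h)), abs_zero]]
  exact (le_abs_self _).trans (norm_setIntegral_le_of_norm_le_const (f := fun x => |u x|) hK
    fun x _ => by rw [Real.norm_eq_abs, abs_abs]; exact hu x)

theorem integral_abs_sum_sub_sum_le {α ι : Type*} [MeasurableSpace α] {μ : Measure α}
    (s : Finset ι) {f h : ι → α → ℝ} (hf : ∀ i ∈ s, Integrable (f i) μ)
    (hh : ∀ i ∈ s, Integrable (h i) μ) :
    ∫ x, |∑ i ∈ s, f i x - ∑ i ∈ s, h i x| ∂μ ≤ ∑ i ∈ s, ∫ x, |f i x - h i x| ∂μ := by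
  have hint : ∀ i ∈ s, Integrable (fun x => |f i x - h i x|) μ :=
    fun i hi => ((hf i hi).sub (hh i hi)).abs
  rw [← integral_finsetSum s hint]
  refine integral_mono_of_nonneg (ae_of_all _ fun x => abs_nonneg _)
    (integrable_finsetSum s hint) (ae_of_all _ fun x => ?_)
  dsimp only
  rw [← Finset.sum_sub_distrib]
  exact Finset.abs_sum_le_sum_abs _ _

theorem integral_abs_sub_le_add {α : Type*} [MeasurableSpace α] {μ : Measure α}
    {f g h : α → ℝ} (hf : Integrable f μ) (hg : Integrable g μ) (hh : Integrable h μ) :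
    ∫ x, |f x - h x| ∂μ ≤ ∫ x, |f x - g x| ∂μ + ∫ x, |g x - h x| ∂μ := by
  have hfg : Integrable (fun x => |f x - g x|) μ := (hf.sub hg).abs
  have hgh : Integrable (fun x => |g x - h x|) μ := (hg.sub hh).abs
  rw [← integral_add hfg hgh]
  exact integral_mono_of_nonneg (ae_of_all _ fun x => abs_nonneg _) (hfg.add hgh)
    (ae_of_all _ fun x => abs_sub_le _ _ _)

section Convolution

variable {G : Type*} [Group G] [TopologicalSpace G] [MeasurableSpace G]

noncomputable def mulConvolution (μ : Measure G) (ψ φ : G → ℝ) (x : G) : ℝ :=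
  ∫ t, ψ t * φ (t⁻¹ * x) ∂μ

def compactConvolutionsOn (μ : Measure G) (P : Set G) : Set (G → ℝ) :=
  {h | ∃ ψ φ : G → ℝ, Integrable ψ μ ∧ Integrable φ μ ∧ HasCompactSupport ψ ∧
    HasCompactSupport φ ∧ support ψ ⊆ P ∧ support φ ⊆ P⁻¹ ∧ h = mulConvolution μ ψ φ}

theorem compactConvolutionsOn_mono {μ : Measure G} {U P : Set G} (hUP : U ⊆ P) :
    compactConvolutionsOn μ U ⊆ compactConvolutionsOn μ P := by
  rintro _ ⟨ψ, φ, hψ, hφ, hψc, hφc, hψU, hφU, rfl⟩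
  exact ⟨ψ, φ, hψ, hφ, hψc, hφc, hψU.trans hUP, hφU.trans (inv_subset_inv.mpr hUP), rfl⟩

variable [IsTopologicalGroup G] [LocallyCompactSpace G] [BorelSpace G]
  (μ : Measure G) [μ.IsHaarMeasure]

theorem exists_abs_sub_mulConvolution_le {U : Set G} (hU : IsOpen U) {p : G} (hp : p ∈ U)
    {g : G → ℝ} (hg : Continuous g) (hgc : HasCompactSupport g) {N : Set G} (hN : N ∈ 𝓝 1)
    {δ : ℝ} (hδ : 0 < δ) :
    ∃ ψ : G → ℝ, Continuous ψ ∧ HasCompactSupport ψ ∧ support ψ ⊆ U ∧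
      (∀ x, |g x - mulConvolution μ ψ (fun y => g (p * y)) x| ≤ δ) ∧
      support (mulConvolution μ ψ (fun y => g (p * y))) ⊆ N⁻¹ * tsupport g := by
  obtain ⟨V, hV, hVg⟩ := hgc.exists_nhds_one_dist_mul_lt hg hδ
  set Ω := U ∩ (fun t => p * t⁻¹) ⁻¹' interior (N ∩ V)
  have hΩ : IsOpen Ω := hU.inter (isOpen_interior.preimage (continuous_const.mul continuous_inv))
  have hpΩ : p ∈ Ω := ⟨hp, by simpa using mem_interior_iff_mem_nhds.mpr (inter_mem hN hV)⟩
  obtain ⟨ψ, hψ, hψc, hψΩ, hψ0, hψ1⟩ := exists_continuous_integral_eq_one μ hΩ ⟨p, hpΩ⟩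
  have hnear : ∀ t, ψ t ≠ 0 → p * t⁻¹ ∈ N ∩ V := fun t ht => interior_subset (hψΩ ht).2
  refine ⟨ψ, hψ, hψc, hψΩ.trans inter_subset_left, fun x => ?_, fun x hx => ?_⟩
  · refine abs_sub_integral_mul_le hψ0 hψ1 ?_ fun t ht => ?_
    · exact (hψ.mul (hg.comp (by fun_prop))).integrable_of_hasCompactSupport hψc.mul_right
    · change |g x - g (p * (t⁻¹ * x))| ≤ δ
      rw [← mul_assoc, abs_sub_comm, ← Real.dist_eq]
      exact (hVg _ (hnear t ht).2 x).le
  · obtain ⟨t, ht⟩ : ∃ t, ψ t * g (p * (t⁻¹ * x)) ≠ 0 := by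
      by_contra! h
      exact hx (by simp [mulConvolution, h])
    refine ⟨(p * t⁻¹)⁻¹, by simpa using (hnear t (left_ne_zero_of_mul ht)).1, p * (t⁻¹ * x),
      subset_tsupport _ (right_ne_zero_of_mul ht), by group⟩

variable [SecondCountableTopology G]

theorem exists_mem_compactConvolutionsOn_integral_abs_sub_le {U : Set G} (hU : IsOpen U)
    {p : G} (hp : p ∈ U) {g : G → ℝ} (hg : Continuous g) (hgc : HasCompactSupport g)
    (hsupp : support g ⊆ p • U⁻¹) {δ : ℝ} (hδ : 0 < δ) :
    ∃ h ∈ compactConvolutionsOn μ U, Integrable h μ ∧ ∫ x, |g x - h x| ∂μ ≤ δ := by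
  -- `N` is fixed first, since the tolerance `δ / (m + 1)` depends on the measure of `K`
  obtain ⟨N, hNc, hN⟩ := exists_compact_mem_nhds (1 : G)
  set K := N⁻¹ * tsupport g
  have hK : IsCompact K := hNc.inv.mul hgc
  set m := μ.real K
  obtain ⟨ψ, hψ, hψc, hψU, hclose, hconv⟩ :=
    exists_abs_sub_mulConvolution_le μ hU hp hg hgc hN (δ := δ / (m + 1)) (by positivity)
  set φ : G → ℝ := fun y => g (p * y)
  have hφ : Continuous φ := hg.comp (continuous_const_mul p)
  have hφc : HasCompactSupport φ := hgc.comp_homeomorph (Homeomorph.mulLeft p)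
  have hφU : support φ ⊆ U⁻¹ := fun y hy => by
    obtain ⟨z, hz, hzy⟩ := hsupp hy
    rwa [mul_left_cancel hzy] at hz
  have hdiff : support (fun x => g x - mulConvolution μ ψ φ x) ⊆ K :=
    (support_sub _ _).trans (union_subset ((subset_tsupport g).trans
      (subset_mul_right _ (by simpa using mem_of_mem_nhds hN))) hconv)
  have hmeas : AEStronglyMeasurable (mulConvolution μ ψ φ) μ :=
    (Continuous.stronglyMeasurable (f := fun q : G × G => ψ q.2 * φ (q.2⁻¹ * q.1))
      (by fun_prop)).integral_prod_right'.aestronglyMeasurable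
  have hint : Integrable (fun x => g x - mulConvolution μ ψ φ x) μ :=
    (Measure.integrableOn_of_bounded hK.measure_lt_top.ne (hg.aestronglyMeasurable.sub hmeas)
      (ae_of_all _ fun x => hclose x)).integrable_of_forall_notMem_eq_zero
      fun x hx => notMem_support.mp fun h => hx (hdiff h)
  refine ⟨mulConvolution μ ψ φ, ⟨ψ, φ, hψ.integrable_of_hasCompactSupport hψc,
    hφ.integrable_of_hasCompactSupport hφc, hψc, hφc, hψU, hφU, rfl⟩,
    ((hg.integrable_of_hasCompactSupport hgc).sub hint).congr
      (ae_of_all _ fun x => sub_sub_cancel _ _), ?_⟩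
  calc ∫ x, |g x - mulConvolution μ ψ φ x| ∂μ ≤ δ / (m + 1) * m :=
        integral_abs_le_of_abs_le_of_support_subset hK.measure_lt_top hclose hdiff
    _ ≤ δ := by
        rw [div_mul_eq_mul_div, div_le_iff₀ (by positivity)]
        nlinarith [measureReal_nonneg (μ := μ) (s := K)]

theorem exists_mem_span_compactConvolutionsOn_integral_abs_sub_lt [T2Space G] {U : Set G}
    (hU : IsOpen U) (hUU : U * U⁻¹ = univ) {g : G → ℝ} (hg : Continuous g) (hgc : HasCompactSupport g)
    {δ : ℝ} (hδ : 0 < δ) :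
    ∃ h ∈ Submodule.span ℝ (compactConvolutionsOn μ U), Integrable h μ ∧
      ∫ x, |g x - h x| ∂μ < δ := by
  have hcover : tsupport g ⊆ ⋃ p ∈ U, p • U⁻¹ := by
    rw [iUnion_smul_left_image, smul_eq_mul, hUU]
    exact subset_univ _
  obtain ⟨t, htU, htfin, htcover⟩ :=
    hgc.isCompact.elim_finite_subcover_image (fun p _ => hU.inv.smul p) hcover
  have := htfin.fintype
  obtain ⟨g', hg', hg'c, hg'supp, hsum⟩ := hgc.exists_sum_eq_of_subset_iUnion hg
    (U := fun p : t => (p : G) • U⁻¹) (fun _ => hU.inv.smul _) (by rwa [iUnion_coe_set])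
  set η := δ / (Fintype.card t + 1)
  choose h hhU hh hgh using fun p : t => exists_mem_compactConvolutionsOn_integral_abs_sub_le μ
    hU (htU p.2) (hg' p) (hg'c p) (hg'supp p) (show 0 < η by positivity)
  refine ⟨∑ p, h p, Submodule.sum_mem _ fun p _ => Submodule.subset_span (hhU p),
    integrable_finsetSum' _ fun p _ => hh p, ?_⟩
  calc ∫ x, |g x - (∑ p, h p) x| ∂μ = ∫ x, |∑ p, g' p x - ∑ p, h p x| ∂μ := by
        simp only [← hsum, Finset.sum_apply]
    _ ≤ ∑ p, ∫ x, |g' p x - h p x| ∂μ := integral_abs_sum_sub_sum_le _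
        (fun p _ => (hg' p).integrable_of_hasCompactSupport (hg'c p)) fun p _ => hh p
    _ ≤ ∑ _p : t, η := Finset.sum_le_sum fun p _ => hgh p
    _ < δ := by
        rw [Finset.sum_const, Finset.card_univ, nsmul_eq_mul, mul_div_assoc',
          div_lt_iff₀ (by positivity)]
        linarith

end Convolution

theorem stmt4_general {G : Type*} [Group G] [TopologicalSpace G] [IsTopologicalGroup G]
    [LocallyCompactSpace G] [T2Space G] [SecondCountableTopology G]
    [MeasurableSpace G] [BorelSpace G]
    (μ : Measure G) [μ.IsHaarMeasure]
    (P : Set G) (hP_one : (1 : G) ∈ P)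
    (hP_mul : ∀ a ∈ P, ∀ b ∈ P, a * b ∈ P)
    (hOre : P * P⁻¹ = Set.univ)
    (hdense : P ⊆ closure (interior P))
    (F : Set (G → ℝ))
    (hF : F = {h | ∃ ψ φ : G → ℝ, Integrable ψ μ ∧ Integrable φ μ ∧
        HasCompactSupport ψ ∧ HasCompactSupport φ ∧
        Function.support ψ ⊆ P ∧ Function.support φ ⊆ P⁻¹ ∧
        h = fun x => ∫ t, ψ t * φ (t⁻¹ * x) ∂μ}) :
    ∀ f : G → ℝ, Integrable f μ → ∀ ε > 0,
      ∃ h ∈ Submodule.span ℝ F, ∫ x, |f x - h x| ∂μ < ε := by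
  intro f hf ε hε
  have hF' : F = compactConvolutionsOn μ P := hF
  have hUU : interior P * (interior P)⁻¹ = univ :=
    interior_mul_inv_interior_eq_univ hP_mul hOre (closure_nonempty_iff.mp ⟨1, hdense hP_one⟩)
  obtain ⟨g, hgc, hfg, hg, hg_int⟩ := hf.exists_hasCompactSupport_integral_sub_le (half_pos hε)
  obtain ⟨h, hh_span, hh, hgh⟩ := exists_mem_span_compactConvolutionsOn_integral_abs_sub_lt μ
    isOpen_interior hUU hg hgc (half_pos hε)
  refine ⟨h, hF' ▸ Submodule.span_mono (compactConvolutionsOn_mono interior_subset) hh_span, ?_⟩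
  calc ∫ x, |f x - h x| ∂μ ≤ ∫ x, |f x - g x| ∂μ + ∫ x, |g x - h x| ∂μ :=
        integral_abs_sub_le_add hf hg_int hh
    _ < ε := by linarith [show ∫ x, |f x - g x| ∂μ ≤ ε / 2 from hfg]

/-- For a closed Ore subsemigroup `P` of a locally compact group `G` with `Int(P)` dense in `P`,
the linear span of convolutions `ψ * φ` with `ψ ∈ L¹(P)`, `φ ∈ L¹(P⁻¹)` compactly supported
is dense in `L¹(G)`. -/
theorem stmt4 {G : Type*} [Group G] [TopologicalSpace G] [IsTopologicalGroup G]
    [LocallyCompactSpace G] [T2Space G] [SecondCountableTopology G]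
    [MeasurableSpace G] [BorelSpace G]
    (μ : Measure G) [μ.IsHaarMeasure]
    (P : Set G) (hP_closed : IsClosed P) (hP_one : (1 : G) ∈ P)
    (hP_mul : ∀ a ∈ P, ∀ b ∈ P, a * b ∈ P)
    (hOre : P * P⁻¹ = Set.univ)
    (hdense : P ⊆ closure (interior P))
    (F : Set (G → ℝ))
    (hF : F = {h | ∃ ψ φ : G → ℝ, Integrable ψ μ ∧ Integrable φ μ ∧
        HasCompactSupport ψ ∧ HasCompactSupport φ ∧
        Function.support ψ ⊆ P ∧ Function.support φ ⊆ P⁻¹ ∧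
        h = fun x => ∫ t, ψ t * φ (t⁻¹ * x) ∂μ}) :
    ∀ f : G → ℝ, Integrable f μ → ∀ ε > 0,
      ∃ h ∈ Submodule.span ℝ F, ∫ x, |f x - h x| ∂μ < ε :=
  stmt4_general μ P hP_one hP_mul hOre hdense F hF
end

section
/- Let G be a locally compact group, P ⊆ G a closed subsemigroup with e ∈ P and Int(P) dense in P. Let A ⊆ G be closed with AP ⊆ A. Then the interior of A is dense in A. -/
open Pointwise

theorem subset_closure_interior_of_mul_subset {G : Type*} [Group G] [TopologicalSpace G]
    [ContinuousConstSMul G G] {P A : Set G} (hP : (1 : G) ∈ closure (interior P))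
    (hAP : A * P ⊆ A) : A ⊆ closure (interior A) := by
  intro a ha
  have ha_closure : a ∈ closure (interior (a • P)) := by
    rw [interior_smul, closure_smul]
    exact ⟨1, hP, mul_one a⟩
  exact closure_mono (interior_mono ((Set.smul_set_subset_mul ha).trans hAP)) ha_closure

theorem stmt6_general {G : Type*} [Group G] [TopologicalSpace G] [IsTopologicalGroup G]
    (P : Set G) (hP_one : (1 : G) ∈ P)
    (hP_dense : P ⊆ closure (interior P))
    (A : Set G) (hAP : A * P ⊆ A) :
    A ⊆ closure (interior A) :=
  subset_closure_interior_of_mul_subset (hP_dense hP_one) hAP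

/-- If `P` is a closed subsemigroup of a locally compact group `G` with `1 ∈ P` and `Int(P)`
dense in `P`, and `A ⊆ G` is closed with `AP ⊆ A`, then `Int(A)` is dense in `A`. -/
theorem stmt6 {G : Type*} [Group G] [TopologicalSpace G] [IsTopologicalGroup G]
    [LocallyCompactSpace G] [T2Space G] [SecondCountableTopology G]
    (P : Set G) (hP_closed : IsClosed P) (hP_one : (1 : G) ∈ P)
    (hP_mul : ∀ a ∈ P, ∀ b ∈ P, a * b ∈ P)
    (hP_dense : P ⊆ closure (interior P))
    (A : Set G) (hA_closed : IsClosed A) (hAP : A * P ⊆ A) :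
    A ⊆ closure (interior A) :=
  stmt6_general P hP_one hP_dense A hAP
end

section
/- Let G be a locally compact group with Haar measure, P ⊆ G a closed subsemigroup with e ∈ P and Int(P) dense in P. Let A ⊆ G be closed with AP ⊆ A. Then the topological boundary ∂A of A has Haar measure zero. -/
open Pointwise MeasureTheory

/-!
Right translation by a point of `Int(P)` pushes `∂A` into `Int(A)`, hence off `∂A`. Since
`1 ∈ closure (Int P)`, such translations come arbitrarily close to the identity, which is
impossible for a set of positive Haar measure by the Steinhaus theorem: `B⁻¹ B` is a
neighbourhood of `1` whenever `μ B > 0`.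
-/

section Topology

variable {G : Type*} [Group G] [TopologicalSpace G] [IsTopologicalGroup G]

theorem mul_interior_subset_interior_of_mul_subset {A P : Set G} (hAP : A * P ⊆ A) :
    A * interior P ⊆ interior A :=
  interior_maximal ((Set.mul_subset_mul_left interior_subset).trans hAP)
    isOpen_interior.mul_left

theorem disjoint_frontier_mul_interior_frontier {A P : Set G} (hA : IsClosed A)
    (hAP : A * P ⊆ A) : Disjoint (frontier A * interior P) (frontier A) := by
  have hsub : frontier A * interior P ⊆ interior A :=
    (Set.mul_subset_mul_right hA.frontier_subset).trans
      (mul_interior_subset_interior_of_mul_subset hAP)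
  exact disjoint_interior_frontier.mono_left hsub

end Topology

theorem measure_eq_zero_of_disjoint_mul_of_one_mem_closure {G : Type*} [Group G]
    [TopologicalSpace G] [IsTopologicalGroup G] [LocallyCompactSpace G] [MeasurableSpace G]
    [BorelSpace G] [MeasurableMul₂ G] (μ : Measure G) [μ.IsHaarMeasure] [SFinite μ]
    [μ.InnerRegular] {B S : Set G} (hB : MeasurableSet B) (hBS : Disjoint (B * S) B)
    (hS : (1 : G) ∈ closure S) : μ B = 0 := by
  by_contra hpos
  have hinv_pos : 0 < μ B⁻¹ := by
    rw [pos_iff_ne_zero, Ne, measure_inv_null]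
    exact hpos
  have hnhds : B⁻¹ / B⁻¹ ∈ nhds (1 : G) :=
    Measure.div_mem_nhds_one_of_haar_pos μ _ hB.inv hinv_pos
  obtain ⟨q, hqB, hqS⟩ := mem_closure_iff_nhds.1 hS _ hnhds
  obtain ⟨a, ha, b, hb, rfl⟩ := Set.mem_div.1 hqB
  have hba : a⁻¹ * (a / b) = b⁻¹ := by rw [div_eq_mul_inv, inv_mul_cancel_left]
  exact Set.disjoint_left.1 hBS (hba ▸ Set.mul_mem_mul ha hqS) hb

theorem stmt7_general {G : Type*} [Group G] [TopologicalSpace G] [IsTopologicalGroup G]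
    [LocallyCompactSpace G] [SecondCountableTopology G]
    [MeasurableSpace G] [BorelSpace G]
    (μ : Measure G) [μ.IsHaarMeasure]
    (P : Set G) (hP_one : (1 : G) ∈ P)
    (hP_dense : P ⊆ closure (interior P))
    (A : Set G) (hA_closed : IsClosed A) (hAP : A * P ⊆ A) :
    μ (frontier A) = 0 :=
  measure_eq_zero_of_disjoint_mul_of_one_mem_closure μ isClosed_frontier.measurableSet
    (disjoint_frontier_mul_interior_frontier hA_closed hAP) (hP_dense hP_one)

/-- If `P` is a closed subsemigroup of a locally compact group `G` with `1 ∈ P` and `Int(P)`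
dense in `P`, and `A ⊆ G` is closed with `AP ⊆ A`, then the boundary `∂A` has Haar
measure zero. -/
theorem stmt7 {G : Type*} [Group G] [TopologicalSpace G] [IsTopologicalGroup G]
    [LocallyCompactSpace G] [T2Space G] [SecondCountableTopology G]
    [MeasurableSpace G] [BorelSpace G]
    (μ : Measure G) [μ.IsHaarMeasure]
    (P : Set G) (hP_closed : IsClosed P) (hP_one : (1 : G) ∈ P)
    (hP_mul : ∀ a ∈ P, ∀ b ∈ P, a * b ∈ P)
    (hP_dense : P ⊆ closure (interior P))
    (A : Set G) (hA_closed : IsClosed A) (hAP : A * P ⊆ A) :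
    μ (frontier A) = 0 :=
  stmt7_general μ P hP_one hP_dense A hA_closed hAP
end

section
/- Let G be a topological group, P a closed subsemigroup with e ∈ P, G = PP⁻¹, and suppose X is a compact Hausdorff space with a continuous injective right action of P. If g ∈ G satisfies g = ab⁻¹ = a₁b₁⁻¹ with a,b,a₁,b₁ ∈ P, then for x, y ∈ X one has xa = yb if and only if xa₁ = yb₁. -/
open Pointwise

/-! If `a⁻¹a₁ = αβ⁻¹` with `α, β ∈ P` (the Ore condition), then `a₁β = aα`, and since
`a⁻¹a₁ = b⁻¹b₁` also `b₁β = bα`. Hence `xa = yb` gives `(xa₁)β = (xa)α = (yb)α = (yb₁)β`,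
and injectivity of `· β` yields `xa₁ = yb₁`. -/

theorem Set.exists_eq_mul_inv_of_mul_inv_eq_univ {G : Type*} [Group G] {P : Set G}
    (hOre : P * P⁻¹ = Set.univ) (g : G) : ∃ α ∈ P, ∃ β ∈ P, g = α * β⁻¹ := by
  obtain ⟨α, hα, β', hβ', rfl⟩ : g ∈ P * P⁻¹ := hOre ▸ Set.mem_univ g
  exact ⟨α, hα, β'⁻¹, hβ', by rw [inv_inv]⟩

theorem act_eq_act_of_mul_eq_mul {G X : Type*} [Group G] {P : Set G} {act : X → G → X}
    (hact_mul : ∀ x, ∀ a ∈ P, ∀ b ∈ P, act (act x a) b = act x (a * b))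
    (hact_inj : ∀ a ∈ P, Function.Injective (fun x => act x a))
    {a b a₁ b₁ α β : G} (ha : a ∈ P) (hb : b ∈ P) (ha₁ : a₁ ∈ P) (hb₁ : b₁ ∈ P)
    (hα : α ∈ P) (hβ : β ∈ P) (hαa : a₁ * β = a * α) (hαb : b₁ * β = b * α)
    {x y : X} (h : act x a = act y b) : act x a₁ = act y b₁ :=
  hact_inj β hβ <| by
    calc act (act x a₁) β = act (act x a) α := by
          rw [hact_mul x a₁ ha₁ β hβ, hact_mul x a ha α hα, hαa]
      _ = act (act y b) α := by rw [h]
      _ = act (act y b₁) β := by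
          rw [hact_mul y b₁ hb₁ β hβ, hact_mul y b hb α hα, hαb]

theorem act_eq_act_of_mul_inv_eq {G X : Type*} [Group G] {P : Set G} {act : X → G → X}
    (hOre : P * P⁻¹ = Set.univ)
    (hact_mul : ∀ x, ∀ a ∈ P, ∀ b ∈ P, act (act x a) b = act x (a * b))
    (hact_inj : ∀ a ∈ P, Function.Injective (fun x => act x a))
    {a b a₁ b₁ : G} (ha : a ∈ P) (hb : b ∈ P) (ha₁ : a₁ ∈ P) (hb₁ : b₁ ∈ P)
    (hg : a * b⁻¹ = a₁ * b₁⁻¹) {x y : X} (h : act x a = act y b) : act x a₁ = act y b₁ := by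
  obtain ⟨α, hα, β, hβ, hαβ⟩ := Set.exists_eq_mul_inv_of_mul_inv_eq_univ hOre (a⁻¹ * a₁)
  have hab : a⁻¹ * a₁ = b⁻¹ * b₁ := by
    rw [mul_inv_eq_iff_eq_mul] at hg
    rw [hg]
    group
  have hα_eq : α = a⁻¹ * a₁ * β := by rw [hαβ]; group
  have hαa : a₁ * β = a * α := by rw [hα_eq]; group
  have hαb : b₁ * β = b * α := by rw [hα_eq, hab]; group
  exact act_eq_act_of_mul_eq_mul hact_mul hact_inj ha hb ha₁ hb₁ hα hβ hαa hαb h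

theorem stmt8_general {G : Type*} [Group G]
    (P : Set G)
    (hOre : P * P⁻¹ = Set.univ)
    {X : Type*}
    (act : X → G → X)
    (hact_mul : ∀ x, ∀ a ∈ P, ∀ b ∈ P, act (act x a) b = act x (a * b))
    (hact_inj : ∀ a ∈ P, Function.Injective (fun x => act x a))
    (a b a₁ b₁ : G) (ha : a ∈ P) (hb : b ∈ P) (ha₁ : a₁ ∈ P) (hb₁ : b₁ ∈ P)
    (hg : a * b⁻¹ = a₁ * b₁⁻¹) (x y : X) :
    act x a = act y b ↔ act x a₁ = act y b₁ :=
  ⟨act_eq_act_of_mul_inv_eq hOre hact_mul hact_inj ha hb ha₁ hb₁ hg,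
    act_eq_act_of_mul_inv_eq hOre hact_mul hact_inj ha₁ hb₁ ha hb hg.symm⟩

/-- For an injective right action of an Ore semigroup `P ⊆ G` on a compact Hausdorff space `X`:
if `g = ab⁻¹ = a₁b₁⁻¹` with `a,b,a₁,b₁ ∈ P`, then for `x, y ∈ X`, `xa = yb ↔ xa₁ = yb₁`. -/
theorem stmt8 {G : Type*} [Group G] [TopologicalSpace G] [IsTopologicalGroup G]
    (P : Set G) (hP_closed : IsClosed P) (hP_one : (1 : G) ∈ P)
    (hP_mul : ∀ a ∈ P, ∀ b ∈ P, a * b ∈ P)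
    (hOre : P * P⁻¹ = Set.univ)
    {X : Type*} [TopologicalSpace X] [CompactSpace X] [T2Space X]
    (act : X → G → X)
    (hact_cont : ContinuousOn (fun p : X × G => act p.1 p.2) (Set.univ ×ˢ P))
    (hact_one : ∀ x, act x 1 = x)
    (hact_mul : ∀ x, ∀ a ∈ P, ∀ b ∈ P, act (act x a) b = act x (a * b))
    (hact_inj : ∀ a ∈ P, Function.Injective (fun x => act x a))
    (a b a₁ b₁ : G) (ha : a ∈ P) (hb : b ∈ P) (ha₁ : a₁ ∈ P) (hb₁ : b₁ ∈ P)
    (hg : a * b⁻¹ = a₁ * b₁⁻¹) (x y : X) :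
    act x a = act y b ↔ act x a₁ = act y b₁ :=
  stmt8_general P hOre act hact_mul hact_inj a b a₁ b₁ ha hb ha₁ hb₁ hg x y
end

section
/- Let P be a closed Ore subsemigroup of a locally compact group G (e ∈ P, G = PP⁻¹, Int(P) dense in P), and let X be a compact Hausdorff space with a continuous injective right P-action. Then the set 𝒢 := {(x,g) ∈ X × G : ∃ a,b ∈ P, y ∈ X with g = ab⁻¹ and xa = yb} is closed in X × G. -/
/-!
Writing `g = a * b⁻¹` with `a, b ∈ P`, membership of `(x, g)` does not depend on the chosen
decomposition: by the Ore condition two decompositions have a common refinement, and injectivity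
of the action cancels it. Hence, for a fixed `b ∈ P`, on the set of `g` with `g * b ∈ P` the
condition reads `x · (g * b) ∈ X · b`, a closed condition since `X · b` is compact. Because the
interior of `P` is nonempty, every `g` has some `b ∈ P` with `g * b ∈ interior P`, so these
closed pieces cover `X × G` by neighbourhoods, and a set that is closed locally is closed.
-/

open Set Filter Topology Pointwise

theorem isClosed_of_forall_exists_mem_nhds_isClosed_inter {α : Type*} [TopologicalSpace α]
    {s : Set α} (h : ∀ z, ∃ t ∈ 𝓝 z, IsClosed (s ∩ t)) : IsClosed s := by
  refine isClosed_of_closure_subset fun z hz => ?_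
  obtain ⟨t, ht, hst⟩ := h z
  have hz' : z ∈ closure (s ∩ t) := mem_closure_iff_nhds.2 fun u hu => by
    simpa only [inter_assoc, inter_comm t] using
      mem_closure_iff_nhds.1 hz (u ∩ t) (inter_mem hu ht)
  exact (hst.closure_subset hz').1

section Ore

variable {G : Type*} [Group G] {P : Set G} {X : Type*}

theorem exists_mul_inv_eq_of_mul_inv_eq_univ (hOre : P * P⁻¹ = univ) (g : G) :
    ∃ a ∈ P, ∃ b ∈ P, a * b⁻¹ = g := by
  obtain ⟨a, ha, b, hb, rfl⟩ : g ∈ P * P⁻¹ := hOre ▸ mem_univ g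
  exact ⟨a, ha, b⁻¹, hb, by rw [inv_inv]⟩

def oreGroupoid (P : Set G) (act : X → G → X) : Set (X × G) :=
  {p | ∃ a ∈ P, ∃ b ∈ P, ∃ y : X, p.2 = a * b⁻¹ ∧ act p.1 a = act y b}

variable {act : X → G → X}

theorem act_eq_act_of_mul_inv_eq_s9 (hOre : P * P⁻¹ = univ)
    (hact_mul : ∀ x, ∀ a ∈ P, ∀ b ∈ P, act (act x a) b = act x (a * b))
    (hact_inj : ∀ a ∈ P, Function.Injective (fun x => act x a))
    {x y : X} {a b a' b' : G} (ha : a ∈ P) (hb : b ∈ P) (ha' : a' ∈ P) (hb' : b' ∈ P)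
    (hab : a * b⁻¹ = a' * b'⁻¹) (hxy : act x a = act y b) : act x a' = act y b' := by
  obtain ⟨c, hc, d, hd, hcd⟩ := exists_mul_inv_eq_of_mul_inv_eq_univ hOre (a⁻¹ * a')
  have hb_cd : b⁻¹ * b' = c * d⁻¹ := by
    rw [hcd, eq_inv_mul_iff_mul_eq, ← mul_assoc, hab]
    group
  have ha'd : a' * d = a * c := by
    calc a' * d = a * (a⁻¹ * a') * d := by group
      _ = a * c := by rw [← hcd]; group
  have hb'd : b' * d = b * c := by
    calc b' * d = b * (b⁻¹ * b') * d := by group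
      _ = b * c := by rw [hb_cd]; group
  apply hact_inj d hd
  simp only [hact_mul _ _ ha' _ hd, hact_mul _ _ hb' _ hd, ha'd, hb'd, ← hact_mul _ _ ha _ hc,
    ← hact_mul _ _ hb _ hc, hxy]

theorem mem_oreGroupoid_iff_mem_range (hOre : P * P⁻¹ = univ)
    (hact_mul : ∀ x, ∀ a ∈ P, ∀ b ∈ P, act (act x a) b = act x (a * b))
    (hact_inj : ∀ a ∈ P, Function.Injective (fun x => act x a))
    {x : X} {g b : G} (hb : b ∈ P) (hgb : g * b ∈ P) :
    (x, g) ∈ oreGroupoid P act ↔ act x (g * b) ∈ range (act · b) := by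
  constructor
  · rintro ⟨a', ha', b', hb', y, rfl, hxy⟩
    exact ⟨y, (act_eq_act_of_mul_inv_eq_s9 hOre hact_mul hact_inj ha' hb' hgb hb
      (by group) hxy).symm⟩
  · rintro ⟨y, hy⟩
    exact ⟨g * b, hgb, b, hb, y, by group, hy.symm⟩

variable [TopologicalSpace G] [IsTopologicalGroup G] [TopologicalSpace X]
  [CompactSpace X] [T2Space X]

theorem isClosed_oreGroupoid_inter_prod (hP_closed : IsClosed P) (hOre : P * P⁻¹ = univ)
    (hact_cont : ContinuousOn (fun p : X × G => act p.1 p.2) (univ ×ˢ P))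
    (hact_mul : ∀ x, ∀ a ∈ P, ∀ b ∈ P, act (act x a) b = act x (a * b))
    (hact_inj : ∀ a ∈ P, Function.Injective (fun x => act x a)) {b : G} (hb : b ∈ P) :
    IsClosed (oreGroupoid P act ∩ univ ×ˢ ((· * b) ⁻¹' P)) := by
  have hW : IsClosed (univ ×ˢ ((· * b) ⁻¹' P) : Set (X × G)) :=
    isClosed_univ.prod (hP_closed.preimage (continuous_mul_const b))
  have hF : ContinuousOn (fun q : X × G => act q.1 (q.2 * b)) (univ ×ˢ ((· * b) ⁻¹' P)) :=
    hact_cont.comp (f := fun q : X × G => (q.1, q.2 * b)) (by fun_prop)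
      (by rintro q ⟨-, hq⟩; exact ⟨trivial, hq⟩)
  have hR : IsClosed (range (act · b)) :=
    (isCompact_range (hact_cont.comp_continuous (f := fun y : X => (y, b)) (by fun_prop)
      fun _ => ⟨trivial, hb⟩)).isClosed
  convert hF.preimage_isClosed_of_isClosed hW hR using 1
  ext ⟨x, g⟩
  simp only [mem_inter_iff, mem_prod, mem_univ, mem_preimage, true_and]
  constructor
  · rintro ⟨hxg, hgb⟩
    exact ⟨hgb, (mem_oreGroupoid_iff_mem_range hOre hact_mul hact_inj hb hgb).1 hxg⟩
  · rintro ⟨hgb, hxg⟩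
    exact ⟨(mem_oreGroupoid_iff_mem_range hOre hact_mul hact_inj hb hgb).2 hxg, hgb⟩

theorem exists_mul_mem_interior (hP_mul : ∀ a ∈ P, ∀ b ∈ P, a * b ∈ P)
    (hOre : P * P⁻¹ = univ) (hP_int : (interior P).Nonempty) (g : G) :
    ∃ b ∈ P, g * b ∈ interior P := by
  obtain ⟨a, ha, b, hb, rfl⟩ := exists_mul_inv_eq_of_mul_inv_eq_univ hOre g
  obtain ⟨p, hp⟩ := hP_int
  have hPP : P * P ⊆ P := by
    rintro _ ⟨u, hu, v, hv, rfl⟩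
    exact hP_mul u hu v hv
  refine ⟨b * p, hP_mul b hb p (interior_subset hp), ?_⟩
  have hap : a * p ∈ interior P :=
    interior_mono hPP (subset_interior_mul_right (mul_mem_mul ha hp))
  simpa only [mul_assoc, inv_mul_cancel_left] using hap

theorem isClosed_oreGroupoid (hP_closed : IsClosed P)
    (hP_mul : ∀ a ∈ P, ∀ b ∈ P, a * b ∈ P) (hOre : P * P⁻¹ = univ)
    (hP_int : (interior P).Nonempty)
    (hact_cont : ContinuousOn (fun p : X × G => act p.1 p.2) (univ ×ˢ P))
    (hact_mul : ∀ x, ∀ a ∈ P, ∀ b ∈ P, act (act x a) b = act x (a * b))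
    (hact_inj : ∀ a ∈ P, Function.Injective (fun x => act x a)) :
    IsClosed (oreGroupoid P act) := by
  refine isClosed_of_forall_exists_mem_nhds_isClosed_inter fun ⟨x, g⟩ => ?_
  obtain ⟨b, hb, hgb⟩ := exists_mul_mem_interior hP_mul hOre hP_int g
  refine ⟨_, ?_, isClosed_oreGroupoid_inter_prod hP_closed hOre hact_cont hact_mul hact_inj hb⟩
  refine prod_mem_nhds univ_mem (mem_of_superset ?_ (preimage_mono interior_subset))
  exact (continuous_mul_const b).continuousAt.preimage_mem_nhds (isOpen_interior.mem_nhds hgb)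

end Ore

theorem stmt9_general {G : Type*} [Group G] [TopologicalSpace G] [IsTopologicalGroup G]
    (P : Set G) (hP_closed : IsClosed P) (hP_one : (1 : G) ∈ P)
    (hP_mul : ∀ a ∈ P, ∀ b ∈ P, a * b ∈ P)
    (hOre : P * P⁻¹ = Set.univ)
    (hP_dense : P ⊆ closure (interior P))
    {X : Type*} [TopologicalSpace X] [CompactSpace X] [T2Space X]
    (act : X → G → X)
    (hact_cont : ContinuousOn (fun p : X × G => act p.1 p.2) (Set.univ ×ˢ P))
    (hact_mul : ∀ x, ∀ a ∈ P, ∀ b ∈ P, act (act x a) b = act x (a * b))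
    (hact_inj : ∀ a ∈ P, Function.Injective (fun x => act x a))
    (𝒢 : Set (X × G))
    (h𝒢 : 𝒢 = {p : X × G | ∃ a ∈ P, ∃ b ∈ P, ∃ y : X,
        p.2 = a * b⁻¹ ∧ act p.1 a = act y b}) :
    IsClosed 𝒢 := by
  have hP_int : (interior P).Nonempty := closure_nonempty_iff.1 ⟨1, hP_dense hP_one⟩
  exact h𝒢 ▸ isClosed_oreGroupoid hP_closed hP_mul hOre hP_int hact_cont hact_mul hact_inj

/-- For a closed Ore subsemigroup `P` of a locally compact group `G` acting injectively and
continuously on a compact Hausdorff space `X`, the set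
`𝒢 = {(x,g) : ∃ a b ∈ P, y ∈ X, g = ab⁻¹ and xa = yb}` is closed in `X × G`. -/
theorem stmt9 {G : Type*} [Group G] [TopologicalSpace G] [IsTopologicalGroup G]
    [LocallyCompactSpace G] [T2Space G] [SecondCountableTopology G]
    (P : Set G) (hP_closed : IsClosed P) (hP_one : (1 : G) ∈ P)
    (hP_mul : ∀ a ∈ P, ∀ b ∈ P, a * b ∈ P)
    (hOre : P * P⁻¹ = Set.univ)
    (hP_dense : P ⊆ closure (interior P))
    {X : Type*} [TopologicalSpace X] [CompactSpace X] [T2Space X]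
    (act : X → G → X)
    (hact_cont : ContinuousOn (fun p : X × G => act p.1 p.2) (Set.univ ×ˢ P))
    (hact_one : ∀ x, act x 1 = x)
    (hact_mul : ∀ x, ∀ a ∈ P, ∀ b ∈ P, act (act x a) b = act x (a * b))
    (hact_inj : ∀ a ∈ P, Function.Injective (fun x => act x a))
    (𝒢 : Set (X × G))
    (h𝒢 : 𝒢 = {p : X × G | ∃ a ∈ P, ∃ b ∈ P, ∃ y : X,
        p.2 = a * b⁻¹ ∧ act p.1 a = act y b}) :
    IsClosed 𝒢 :=
  stmt9_general P hP_closed hP_one hP_mul hOre hP_dense act hact_cont hact_mul hact_inj 𝒢 h𝒢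
end

section
/- With P, G, X, 𝒢 as above, if (x,g), (y,h) ∈ 𝒢 with y = s(x,g), then (x, gh) ∈ 𝒢. Consequently 𝒢 with multiplication (x,g)(s(x,g),h) = (x,gh) and inversion (x,g)⁻¹ = (s(x,g), g⁻¹) is a groupoid. -/
/-!
Write `g = a b⁻¹` with `x a = y b` and `h = c d⁻¹` with `y c = z d`. The Ore condition gives
`u, v ∈ P` with `c v = b u`; then `x (a u) = y (b u) = y (c v) = z (d v)` and
`g h = (a u) (d v)⁻¹`, so `(x, g h) ∈ 𝒢` with witness `z`.
-/

open Pointwise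

section OreComposition

variable {G : Type*} [Group G] {P : Set G}

theorem exists_mul_eq_mul_of_mul_inv_eq_univ (hOre : P * P⁻¹ = Set.univ) (b c : G) :
    ∃ u ∈ P, ∃ v ∈ P, c * v = b * u := by
  obtain ⟨u, hu, w, hw, huw⟩ : b⁻¹ * c ∈ P * P⁻¹ := hOre ▸ Set.mem_univ _
  simp only at huw
  exact ⟨u, hu, w⁻¹, hw, by rw [mul_inv_eq_iff_eq_mul, mul_assoc, huw, mul_inv_cancel_left]⟩

theorem mul_inv_mul_mul_inv_of_mul_eq_mul {a b c d u v : G} (h : c * v = b * u) :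
    a * b⁻¹ * (c * d⁻¹) = a * u * (d * v)⁻¹ := by
  have hbc : b⁻¹ * c = u * v⁻¹ := by
    rw [inv_mul_eq_iff_eq_mul, ← mul_assoc, eq_mul_inv_iff_mul_eq, h]
  calc a * b⁻¹ * (c * d⁻¹) = a * (b⁻¹ * c) * d⁻¹ := by group
    _ = a * u * (d * v)⁻¹ := by rw [hbc]; group

variable {X : Type*} {act : X → G → X}

theorem act_mul_eq_act_mul_of_act_eq
    (hact_mul : ∀ x, ∀ a ∈ P, ∀ b ∈ P, act (act x a) b = act x (a * b))
    {x y : X} {a b u : G} (ha : a ∈ P) (hb : b ∈ P) (hu : u ∈ P) (h : act x a = act y b) :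
    act x (a * u) = act y (b * u) := by
  rw [← hact_mul x a ha u hu, h, hact_mul y b hb u hu]

end OreComposition

theorem stmt11_general {G : Type*} [Group G]
    (P : Set G)
    (hP_mul : ∀ a ∈ P, ∀ b ∈ P, a * b ∈ P)
    (hOre : P * P⁻¹ = Set.univ)
    {X : Type*}
    (act : X → G → X)
    (hact_mul : ∀ x, ∀ a ∈ P, ∀ b ∈ P, act (act x a) b = act x (a * b))
    (𝒢 : Set (X × G))
    (h𝒢 : 𝒢 = {p : X × G | ∃ a ∈ P, ∃ b ∈ P, ∃ y : X,
        p.2 = a * b⁻¹ ∧ act p.1 a = act y b})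
    (x y : X) (g h : G) (hyh : (y, h) ∈ 𝒢)
    (hs : ∃ a ∈ P, ∃ b ∈ P, g = a * b⁻¹ ∧ act x a = act y b) :
    (x, g * h) ∈ 𝒢 := by
  obtain ⟨a, ha, b, hb, rfl, hxa⟩ := hs
  subst h𝒢
  obtain ⟨c, hc, d, hd, z, rfl, hyc⟩ := hyh
  obtain ⟨u, hu, v, hv, hcv⟩ := exists_mul_eq_mul_of_mul_inv_eq_univ hOre b c
  refine ⟨a * u, hP_mul a ha u hu, d * v, hP_mul d hd v hv, z,
    mul_inv_mul_mul_inv_of_mul_eq_mul hcv, ?_⟩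
  calc act x (a * u) = act y (b * u) := act_mul_eq_act_mul_of_act_eq hact_mul ha hb hu hxa
    _ = act y (c * v) := by rw [hcv]
    _ = act z (d * v) := act_mul_eq_act_mul_of_act_eq hact_mul hc hd hv hyc

/-- If `(x,g), (y,h) ∈ 𝒢` with `y = s(x,g)`, then `(x, gh) ∈ 𝒢`; hence `𝒢` is closed under
the groupoid multiplication `(x,g)(s(x,g),h) = (x,gh)`. -/
theorem stmt11 {G : Type*} [Group G] [TopologicalSpace G] [IsTopologicalGroup G]
    [LocallyCompactSpace G] [T2Space G] [SecondCountableTopology G]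
    (P : Set G) (hP_closed : IsClosed P) (hP_one : (1 : G) ∈ P)
    (hP_mul : ∀ a ∈ P, ∀ b ∈ P, a * b ∈ P)
    (hOre : P * P⁻¹ = Set.univ)
    (hP_dense : P ⊆ closure (interior P))
    {X : Type*} [TopologicalSpace X] [CompactSpace X] [T2Space X]
    (act : X → G → X)
    (hact_cont : ContinuousOn (fun p : X × G => act p.1 p.2) (Set.univ ×ˢ P))
    (hact_one : ∀ x, act x 1 = x)
    (hact_mul : ∀ x, ∀ a ∈ P, ∀ b ∈ P, act (act x a) b = act x (a * b))
    (hact_inj : ∀ a ∈ P, Function.Injective (fun x => act x a))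
    (𝒢 : Set (X × G))
    (h𝒢 : 𝒢 = {p : X × G | ∃ a ∈ P, ∃ b ∈ P, ∃ y : X,
        p.2 = a * b⁻¹ ∧ act p.1 a = act y b})
    (x y : X) (g h : G) (hxg : (x, g) ∈ 𝒢) (hyh : (y, h) ∈ 𝒢)
    (hs : ∃ a ∈ P, ∃ b ∈ P, g = a * b⁻¹ ∧ act x a = act y b) :
    (x, g * h) ∈ 𝒢 :=
  stmt11_general P hP_mul hOre act hact_mul 𝒢 h𝒢 x y g h hyh hs
end

section
/- Let P be a closed Ore subsemigroup of a locally compact group G acting injectively and continuously on a compact Hausdorff space X, and suppose the groupoid 𝒢 = X ⋊ P has a left Haar system. Then the map X → 𝒞(G) sending x to Q_x is continuous, where 𝒞(G) is the space of closed subsets of G with the Vietoris topology. -/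
/-!
Write `x • a` for `act x a`. Every `g ∈ G` is `a * b⁻¹` with `a, b ∈ Int P`, and for any such
decomposition `(x, g) ∈ 𝒢 ↔ x • a ∈ X • b`: two decompositions are compared through a common right
multiple (the Ore condition), which injectivity of the action then cancels. Near `(x, g)` the
groupoid is thus the preimage of the compact set `X • b` under `(x', g') ↦ x' • (g' * b)`, so `𝒢`
is closed, and projecting `𝒢 ∩ (X × K)` shows that `{x | Q x ∩ K = ∅}` is open for compact `K`.
If `a * b⁻¹ ∈ Q x ∩ U` with `U` open, then `x • a` lies in the image of
`X × {b' ∈ Int P | a * b'⁻¹ ∈ U}` under the action, which is open by the Haar system hypothesis,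
and every `x'` with `x' • a` in that image has `a * b'⁻¹ ∈ Q x' ∩ U` for some `b'`.
-/

open Pointwise

/-- The topology on the hyperspace of closed subsets of a locally compact space used in the
paper (called the Vietoris topology there, also known as the Fell/Chabauty topology), with
subbasic open sets `{A : A ∩ K = ∅}` for `K` compact and `{A : A ∩ U ≠ ∅}` for `U` open. -/
def fellTopology (G : Type*) [TopologicalSpace G] : TopologicalSpace (Set G) :=
  TopologicalSpace.generateFrom
    ({S | ∃ K : Set G, IsCompact K ∧ S = {A : Set G | A ∩ K = ∅}} ∪
     {S | ∃ U : Set G, IsOpen U ∧ S = {A : Set G | (A ∩ U).Nonempty}})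

open Topology Set

section

variable {X G : Type*} [TopologicalSpace X] [TopologicalSpace G]

theorem continuous_fellTopology_iff {Q : X → Set G} :
    Continuous[_, fellTopology G] Q ↔
      (∀ K, IsCompact K → IsOpen {x | Q x ∩ K = ∅}) ∧
        ∀ U, IsOpen U → IsOpen {x | (Q x ∩ U).Nonempty} := by
  rw [fellTopology, continuous_generateFrom_iff]
  refine ⟨fun h => ⟨fun K hK => h _ (.inl ⟨K, hK, rfl⟩), fun U hU => h _ (.inr ⟨U, hU, rfl⟩)⟩, ?_⟩
  rintro ⟨hK, hU⟩ s (⟨K, hK', rfl⟩ | ⟨U, hU', rfl⟩)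
  exacts [hK K hK', hU U hU']

theorem isOpen_setOf_inter_eq_empty_of_isClosed {𝒢 : Set (X × G)} (h𝒢 : IsClosed 𝒢)
    {K : Set G} (hK : IsCompact K) : IsOpen {x | {g | (x, g) ∈ 𝒢} ∩ K = ∅} := by
  have : CompactSpace K := isCompact_iff_compactSpace.1 hK
  have hclosed : IsClosed (Prod.fst '' ((Prod.map id (↑) : X × K → X × G) ⁻¹' 𝒢)) :=
    isClosedMap_fst_of_compactSpace _ (h𝒢.preimage (by fun_prop))
  convert hclosed.isOpen_compl using 1
  ext x
  simp [eq_empty_iff_forall_notMem, imp_not_comm]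

theorem continuous_act_of_mem {P : Set G} {act : X → G → X}
    (hact_cont : ContinuousOn (fun p : X × G => act p.1 p.2) (univ ×ˢ P)) {a : G} (ha : a ∈ P) :
    Continuous (act · a) :=
  hact_cont.comp_continuous (continuous_id.prodMk continuous_const) fun _ => ⟨trivial, ha⟩

end

section OreSemigroup

variable {G : Type*} [Group G] {P : Set G}

theorem exists_mem_eq_mul_inv (hOre : P * P⁻¹ = univ) (g : G) :
    ∃ a ∈ P, ∃ b ∈ P, g = a * b⁻¹ := by
  obtain ⟨a, ha, c, hc, rfl⟩ : g ∈ P * P⁻¹ := hOre ▸ mem_univ g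
  exact ⟨a, ha, c⁻¹, hc, by rw [inv_inv]⟩

theorem exists_mem_mul_eq_mul (hOre : P * P⁻¹ = univ) (b b' : G) :
    ∃ p ∈ P, ∃ q ∈ P, b * p = b' * q := by
  obtain ⟨p, hp, q, hq, h⟩ := exists_mem_eq_mul_inv hOre (b⁻¹ * b')
  refine ⟨p, hp, q, hq, ?_⟩
  calc b * p = b * (p * q⁻¹) * q := by group
    _ = b' * q := by rw [← h]; group

theorem exists_mem_interior_eq_mul_inv [TopologicalSpace G] [IsTopologicalGroup G]
    (hP_mul : ∀ a ∈ P, ∀ b ∈ P, a * b ∈ P) (hOre : P * P⁻¹ = univ)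
    (hint : (interior P).Nonempty) (g : G) :
    ∃ a ∈ interior P, ∃ b ∈ interior P, g = a * b⁻¹ := by
  obtain ⟨u, hu⟩ := hint
  have hPint : ∀ a ∈ P, a * u ∈ interior P := fun a ha =>
    interior_mono (mul_subset_iff.2 hP_mul) (subset_interior_mul_right (mul_mem_mul ha hu))
  obtain ⟨a, ha, b, hb, rfl⟩ := exists_mem_eq_mul_inv hOre g
  exact ⟨a * u, hPint a ha, b * u, hPint b hb, by group⟩

end OreSemigroup

section ActionGroupoid

variable {G X : Type*} [Group G] {P : Set G} {act : X → G → X}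

variable (P act) in
def actionGroupoid : Set (X × G) :=
  {p | ∃ a ∈ P, ∃ b ∈ P, ∃ y : X, p.2 = a * b⁻¹ ∧ act p.1 a = act y b}

theorem mem_actionGroupoid_iff (hOre : P * P⁻¹ = univ)
    (hact_mul : ∀ x, ∀ a ∈ P, ∀ b ∈ P, act (act x a) b = act x (a * b))
    (hact_inj : ∀ a ∈ P, Function.Injective (fun x => act x a))
    {x : X} {g a b : G} (ha : a ∈ P) (hb : b ∈ P) (hg : g = a * b⁻¹) :
    (x, g) ∈ actionGroupoid P act ↔ act x a ∈ range (act · b) := by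
  refine ⟨?_, fun ⟨y, hy⟩ => ⟨a, ha, b, hb, y, hg, hy.symm⟩⟩
  rintro ⟨a', ha', b', hb', y, hg', hy⟩
  dsimp only at hg' hy
  obtain ⟨p, hp, q, hq, hpq⟩ := exists_mem_mul_eq_mul hOre b' b
  have haq : a * q = a' * p := by
    rw [show a = g * b by rw [hg]; group, show a' = g * b' by rw [hg']; group, mul_assoc,
      mul_assoc, hpq]
  refine ⟨y, hact_inj q hq ?_⟩
  simp only [hact_mul _ _ hb _ hq, hact_mul _ _ ha _ hq, haq, ← hpq, ← hact_mul _ _ ha' _ hp,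
    ← hact_mul _ _ hb' _ hp, hy]

variable [TopologicalSpace G] [TopologicalSpace X]

theorem isClosed_actionGroupoid [IsTopologicalGroup G] [CompactSpace X] [T2Space X]
    (hP_mul : ∀ a ∈ P, ∀ b ∈ P, a * b ∈ P) (hOre : P * P⁻¹ = univ)
    (hint : (interior P).Nonempty)
    (hact_cont : ContinuousOn (fun p : X × G => act p.1 p.2) (univ ×ˢ P))
    (hact_mul : ∀ x, ∀ a ∈ P, ∀ b ∈ P, act (act x a) b = act x (a * b))
    (hact_inj : ∀ a ∈ P, Function.Injective (fun x => act x a)) :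
    IsClosed (actionGroupoid P act) := by
  rw [← isOpen_compl_iff, isOpen_iff_mem_nhds]
  rintro ⟨x, g⟩ hxg
  obtain ⟨a, ha, b, hb, rfl⟩ := exists_mem_interior_eq_mul_inv hP_mul hOre hint g
  let Ω : Set (X × G) := {p | p.2 * b ∈ interior P}
  let f : X × G → X := fun p => act p.1 (p.2 * b)
  have hΩ : IsOpen Ω := isOpen_interior.preimage (continuous_snd.mul continuous_const)
  have hf : ContinuousOn f Ω :=
    hact_cont.comp (continuous_fst.prodMk (continuous_snd.mul continuous_const)).continuousOn
      fun p hp => ⟨trivial, interior_subset hp⟩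
  have hrange : IsClosed (range (act · b)) :=
    (isCompact_range (continuous_act_of_mem hact_cont (interior_subset hb))).isClosed
  have hmem : ∀ p ∈ Ω, p ∈ actionGroupoid P act ↔ f p ∈ range (act · b) := fun p hp =>
    mem_actionGroupoid_iff hOre hact_mul hact_inj (interior_subset hp) (interior_subset hb)
      (mul_inv_cancel_right _ _).symm
  have hxgΩ : (x, a * b⁻¹) ∈ Ω := by simpa [Ω] using ha
  refine Filter.mem_of_superset
    ((hf.isOpen_inter_preimage hΩ hrange.isOpen_compl).mem_nhds ⟨hxgΩ, ?_⟩)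
    fun p ⟨hpΩ, hp⟩ hpG => hp ((hmem p hpΩ).1 hpG)
  exact fun h => hxg ((hmem _ hxgΩ).2 h)

theorem isOpen_setOf_nonempty_inter_actionGroupoid [IsTopologicalGroup G]
    (hP_mul : ∀ a ∈ P, ∀ b ∈ P, a * b ∈ P) (hOre : P * P⁻¹ = univ)
    (hint : (interior P).Nonempty)
    (hact_cont : ContinuousOn (fun p : X × G => act p.1 p.2) (univ ×ˢ P))
    (hact_mul : ∀ x, ∀ a ∈ P, ∀ b ∈ P, act (act x a) b = act x (a * b))
    (hact_inj : ∀ a ∈ P, Function.Injective (fun x => act x a))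
    (hopen : ∀ V : Set (X × G), IsOpen V →
      IsOpen ((fun p : X × G => act p.1 p.2) '' (V ∩ univ ×ˢ interior P)))
    {U : Set G} (hU : IsOpen U) :
    IsOpen {x | ({g | (x, g) ∈ actionGroupoid P act} ∩ U).Nonempty} := by
  rw [isOpen_iff_mem_nhds]
  rintro x ⟨g, hgx, hgU⟩
  obtain ⟨a, ha, b, hb, rfl⟩ := exists_mem_interior_eq_mul_inv hP_mul hOre hint g
  obtain ⟨y, hy⟩ := (mem_actionGroupoid_iff hOre hact_mul hact_inj (interior_subset ha)
    (interior_subset hb) rfl).1 hgx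
  have hW : IsOpen (univ ×ˢ {b' | a * b'⁻¹ ∈ U} : Set (X × G)) :=
    isOpen_univ.prod (hU.preimage (by fun_prop))
  have hO := (hopen _ hW).preimage (continuous_act_of_mem hact_cont (interior_subset ha))
  refine Filter.mem_of_superset (hO.mem_nhds ⟨(y, b), ⟨⟨trivial, hgU⟩, trivial, hb⟩, hy⟩) ?_
  rintro x' ⟨⟨y', b'⟩, ⟨⟨-, hb'U⟩, -, hb'⟩, hx'⟩
  exact ⟨a * b'⁻¹, ⟨a, interior_subset ha, b', interior_subset hb', y', rfl, hx'.symm⟩, hb'U⟩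

end ActionGroupoid

theorem stmt14_general {G : Type*} [Group G] [TopologicalSpace G] [IsTopologicalGroup G]
    (P : Set G) (hP_one : (1 : G) ∈ P)
    (hP_mul : ∀ a ∈ P, ∀ b ∈ P, a * b ∈ P)
    (hOre : P * P⁻¹ = Set.univ)
    (hP_dense : P ⊆ closure (interior P))
    {X : Type*} [TopologicalSpace X] [CompactSpace X] [T2Space X]
    (act : X → G → X)
    (hact_cont : ContinuousOn (fun p : X × G => act p.1 p.2) (Set.univ ×ˢ P))
    (hact_mul : ∀ x, ∀ a ∈ P, ∀ b ∈ P, act (act x a) b = act x (a * b))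
    (hact_inj : ∀ a ∈ P, Function.Injective (fun x => act x a))
    (hopen : ∀ V : Set (X × G), IsOpen V →
      IsOpen ((fun p : X × G => act p.1 p.2) '' (V ∩ Set.univ ×ˢ interior P)))
    (𝒢 : Set (X × G))
    (h𝒢 : 𝒢 = {p : X × G | ∃ a ∈ P, ∃ b ∈ P, ∃ y : X,
        p.2 = a * b⁻¹ ∧ act p.1 a = act y b})
    (Q : X → Set G) (hQ : ∀ z, Q z = {g : G | (z, g) ∈ 𝒢}) :
    @Continuous X (Set G) _ (fellTopology G) Q := by
  have hint : (interior P).Nonempty := closure_nonempty_iff.1 ⟨1, hP_dense hP_one⟩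
  obtain rfl : Q = fun x => {g | (x, g) ∈ actionGroupoid P act} := funext fun x => by
    rw [hQ, h𝒢]; rfl
  refine continuous_fellTopology_iff.2 ⟨fun K hK => ?_, fun U hU => ?_⟩
  · exact isOpen_setOf_inter_eq_empty_of_isClosed
      (isClosed_actionGroupoid hP_mul hOre hint hact_cont hact_mul hact_inj) hK
  · exact isOpen_setOf_nonempty_inter_actionGroupoid hP_mul hOre hint hact_cont hact_mul
      hact_inj hopen hU

/-- If the groupoid `𝒢 = X ⋊ P` has a left Haar system (equivalently, the action map
`X × Int(P) → X` is open), then `x ↦ Q_x` is continuous into the space of closed subsets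
of `G` with the Vietoris (Fell) topology. -/
theorem stmt14 {G : Type*} [Group G] [TopologicalSpace G] [IsTopologicalGroup G]
    [LocallyCompactSpace G] [T2Space G] [SecondCountableTopology G]
    (P : Set G) (hP_closed : IsClosed P) (hP_one : (1 : G) ∈ P)
    (hP_mul : ∀ a ∈ P, ∀ b ∈ P, a * b ∈ P)
    (hOre : P * P⁻¹ = Set.univ)
    (hP_dense : P ⊆ closure (interior P))
    {X : Type*} [TopologicalSpace X] [CompactSpace X] [T2Space X]
    (act : X → G → X)
    (hact_cont : ContinuousOn (fun p : X × G => act p.1 p.2) (Set.univ ×ˢ P))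
    (hact_one : ∀ x, act x 1 = x)
    (hact_mul : ∀ x, ∀ a ∈ P, ∀ b ∈ P, act (act x a) b = act x (a * b))
    (hact_inj : ∀ a ∈ P, Function.Injective (fun x => act x a))
    (hopen : ∀ V : Set (X × G), IsOpen V →
      IsOpen ((fun p : X × G => act p.1 p.2) '' (V ∩ Set.univ ×ˢ interior P)))
    (𝒢 : Set (X × G))
    (h𝒢 : 𝒢 = {p : X × G | ∃ a ∈ P, ∃ b ∈ P, ∃ y : X,
        p.2 = a * b⁻¹ ∧ act p.1 a = act y b})
    (Q : X → Set G) (hQ : ∀ z, Q z = {g : G | (z, g) ∈ 𝒢}) :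
    @Continuous X (Set G) _ (fellTopology G) Q :=
  stmt14_general P hP_one hP_mul hOre hP_dense act hact_cont hact_mul hact_inj hopen 𝒢 h𝒢 Q hQ
end

section
/- Let P be a closed Ore subsemigroup of a locally compact group G with e ∈ P, G = PP⁻¹ and Int(P) dense in P. Let X be the closure of {P⁻¹a : a ∈ P} in the space 𝒞(G) of closed subsets of G with the Vietoris topology (the order compactification of P). Then for every open W ⊆ Int(P), XW = {A ∈ X : A ∩ W ≠ ∅}; in particular XW is open in X. -/
/-!
Right translation by `g` is a homeomorphism of `G`, hence acts continuously on the hyperspace.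
Since `P⁻¹a · w = P⁻¹(aw)`, translation by `w ∈ P` maps `X` into itself; and every member of `X`
contains `1`, because the closed sets containing `1` form a closed family. So `Aw ∈ X` meets `W`
at `w` whenever `A ∈ X` and `w ∈ W`.

Conversely, let `x ∈ A ∩ W`. As `1 ∈ closure (Int P)`, there is `w ∈ W` with `x w⁻¹ ∈ Int P`.
Then `A` lies in the open family of sets meeting `(Int P) w`, and every `P⁻¹a` in that family
has `a w⁻¹ ∈ P P ⊆ P`, so its translate by `w⁻¹` is `P⁻¹(a w⁻¹)`. Translating the closure,
`A w⁻¹ ∈ X`, and `A = (A w⁻¹) w`.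
-/

open Pointwise

open Set Topology

namespace fellTopology

section Hyperspace

variable {X Y : Type*} [TopologicalSpace X] [TopologicalSpace Y]

lemma isOpen_setOf_inter_eq_empty {K : Set X} (hK : IsCompact K) :
    IsOpen[fellTopology X] {A | A ∩ K = ∅} :=
  .basic _ (.inl ⟨K, hK, rfl⟩)

lemma isOpen_setOf_inter_nonempty {U : Set X} (hU : IsOpen U) :
    IsOpen[fellTopology X] {A | (A ∩ U).Nonempty} :=
  .basic _ (.inr ⟨U, hU, rfl⟩)

lemma isClosed_setOf_mem (x : X) : IsClosed[fellTopology X] {A | x ∈ A} := by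
  refine @isOpen_compl_iff _ _ (fellTopology X) |>.mp ?_
  convert isOpen_setOf_inter_eq_empty (isCompact_singleton (x := x)) using 1
  ext A
  simp [inter_singleton_eq_empty]

lemma continuous_image (e : X ≃ₜ Y) :
    Continuous[fellTopology X, fellTopology Y] (image e) := by
  refine continuous_generateFrom_iff.mpr ?_
  rintro _ (⟨K, hK, rfl⟩ | ⟨U, hU, rfl⟩)
  · convert isOpen_setOf_inter_eq_empty (e.isCompact_preimage.mpr hK) using 1
    ext A
    simp only [mem_preimage, mem_ofPred_eq, ← not_nonempty_iff_eq_empty,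
      image_inter_nonempty_iff]
  · convert isOpen_setOf_inter_nonempty (hU.preimage e.continuous) using 1
    ext A
    exact image_inter_nonempty_iff

end Hyperspace

lemma continuous_mul_singleton {G : Type*} [Group G] [TopologicalSpace G] [IsTopologicalGroup G]
    (g : G) : Continuous[fellTopology G, fellTopology G] (· * {g}) := by
  convert continuous_image (Homeomorph.mulRight g) using 1
  exact funext fun A => mul_singleton

end fellTopology

section OrderCompactification

variable {G : Type*} [Group G] [TopologicalSpace G]

def orderCompactification (P : Set G) : Set (Set G) :=
  closure[fellTopology G] {B | ∃ a ∈ P, B = P⁻¹ * {a}}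

variable {P : Set G}

lemma one_mem_of_mem_orderCompactification {A : Set G} (hA : A ∈ orderCompactification P) :
    (1 : G) ∈ A := by
  let _ := fellTopology G
  refine closure_minimal ?_ (fellTopology.isClosed_setOf_mem 1) hA
  rintro _ ⟨a, ha, rfl⟩
  exact ⟨a⁻¹, inv_mem_inv.mpr ha, a, rfl, inv_mul_cancel a⟩

variable [IsTopologicalGroup G]

lemma mul_singleton_mem_orderCompactification (hP_mul : ∀ a ∈ P, ∀ b ∈ P, a * b ∈ P)
    {A : Set G} (hA : A ∈ orderCompactification P) {w : G} (hw : w ∈ P) :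
    A * {w} ∈ orderCompactification P := by
  let _ := fellTopology G
  refine MapsTo.closure (f := (· * {w})) ?_ (fellTopology.continuous_mul_singleton w) hA
  rintro _ ⟨a, ha, rfl⟩
  exact ⟨a * w, hP_mul a ha w hw, by simp only [mul_assoc, singleton_mul_singleton]⟩

lemma mul_singleton_inv_mem_orderCompactification (hP_mul : ∀ a ∈ P, ∀ b ∈ P, a * b ∈ P)
    {A : Set G} (hA : A ∈ orderCompactification P) {x w : G} (hx : x ∈ A)
    (hxw : x * w⁻¹ ∈ interior P) : A * {w⁻¹} ∈ orderCompactification P := by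
  let _ := fellTopology G
  have hAO : A ∈ {B : Set G | (B ∩ (interior P * {w})).Nonempty} :=
    ⟨x, hx, x * w⁻¹, hxw, w, rfl, inv_mul_cancel_right x w⟩
  have hO : IsOpen {B : Set G | (B ∩ (interior P * {w})).Nonempty} := by
    refine fellTopology.isOpen_setOf_inter_nonempty ?_
    rw [mul_singleton]
    exact isOpenMap_mul_right w _ isOpen_interior
  refine MapsTo.closure (f := (· * {w⁻¹})) ?_ (fellTopology.continuous_mul_singleton w⁻¹)
    (hO.inter_closure ⟨hAO, hA⟩)
  rintro _ ⟨⟨y, hy, hyw⟩, a, -, rfl⟩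
  simp only [mul_singleton, mem_image] at hy hyw
  obtain ⟨p, hp, rfl⟩ := hy
  obtain ⟨q, hq, hqw⟩ := hyw
  have haw : a * w⁻¹ = p⁻¹ * q := by
    calc a * w⁻¹ = p⁻¹ * (p * a) * w⁻¹ := by group
      _ = p⁻¹ * q := by rw [← hqw]; group
  refine ⟨a * w⁻¹, haw ▸ hP_mul _ hp _ (interior_subset hq), ?_⟩
  simp only [mul_assoc, singleton_mul_singleton]

end OrderCompactification

lemma exists_mem_mul_inv_mem_of_one_mem_closure {G : Type*} [Group G] [TopologicalSpace G]
    [IsTopologicalGroup G] {S W : Set G} (hS : (1 : G) ∈ closure S) (hW : IsOpen W) {x : G}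
    (hx : x ∈ W) : ∃ w ∈ W, x * w⁻¹ ∈ S := by
  have hN : IsOpen ((fun p : G => p⁻¹ * x) ⁻¹' W) := hW.preimage (by fun_prop)
  obtain ⟨p, hpW, hpS⟩ := mem_closure_iff.mp hS _ hN (by simpa using hx)
  exact ⟨p⁻¹ * x, hpW, by simpa using hpS⟩

theorem stmt15_general {G : Type*} [Group G] [TopologicalSpace G] [IsTopologicalGroup G]
    (P : Set G) (hP_one : (1 : G) ∈ P)
    (hP_mul : ∀ a ∈ P, ∀ b ∈ P, a * b ∈ P)
    (hP_dense : P ⊆ closure (interior P))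
    (Xc : Set (Set G))
    (hXc : Xc = @closure (Set G) (fellTopology G) {B : Set G | ∃ a ∈ P, B = P⁻¹ * {a}})
    (W : Set G) (hW_open : IsOpen W) (hW : W ⊆ interior P) :
    {C : Set G | ∃ A ∈ Xc, ∃ w ∈ W, C = A * {w}} = {A ∈ Xc | (A ∩ W).Nonempty} ∧
      ∃ V : Set (Set G), @IsOpen (Set G) (fellTopology G) V ∧
        {A ∈ Xc | (A ∩ W).Nonempty} = Xc ∩ V := by
  change Xc = orderCompactification P at hXc
  subst hXc
  refine ⟨?_, _, fellTopology.isOpen_setOf_inter_nonempty hW_open, rfl⟩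
  ext C
  constructor
  · rintro ⟨A, hA, w, hw, rfl⟩
    exact ⟨mul_singleton_mem_orderCompactification hP_mul hA (interior_subset (hW hw)),
      w, ⟨1, one_mem_of_mem_orderCompactification hA, w, rfl, one_mul w⟩, hw⟩
  · rintro ⟨hC, x, hxC, hxW⟩
    obtain ⟨w, hw, hxw⟩ :=
      exists_mem_mul_inv_mem_of_one_mem_closure (hP_dense hP_one) hW_open hxW
    refine ⟨C * {w⁻¹}, mul_singleton_inv_mem_orderCompactification hP_mul hC hxC hxw, w, hw, ?_⟩
    rw [mul_assoc, singleton_mul_singleton, inv_mul_cancel, singleton_one, mul_one]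

/-- Let `X` be the order compactification of `P` (the closure of `{P⁻¹a : a ∈ P}` in the
hyperspace of `G`).  For every open `W ⊆ Int(P)`, `XW = {A ∈ X : A ∩ W ≠ ∅}`; in
particular `XW` is open in `X`. -/
theorem stmt15 {G : Type*} [Group G] [TopologicalSpace G] [IsTopologicalGroup G]
    [LocallyCompactSpace G] [T2Space G] [SecondCountableTopology G]
    (P : Set G) (hP_closed : IsClosed P) (hP_one : (1 : G) ∈ P)
    (hP_mul : ∀ a ∈ P, ∀ b ∈ P, a * b ∈ P)
    (hOre : P * P⁻¹ = Set.univ)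
    (hP_dense : P ⊆ closure (interior P))
    (Xc : Set (Set G))
    (hXc : Xc = @closure (Set G) (fellTopology G) {B : Set G | ∃ a ∈ P, B = P⁻¹ * {a}})
    (W : Set G) (hW_open : IsOpen W) (hW : W ⊆ interior P) :
    {C : Set G | ∃ A ∈ Xc, ∃ w ∈ W, C = A * {w}} = {A ∈ Xc | (A ∩ W).Nonempty} ∧
      ∃ V : Set (Set G), @IsOpen (Set G) (fellTopology G) V ∧
        {A ∈ Xc | (A ∩ W).Nonempty} = Xc ∩ V :=
  stmt15_general P hP_one hP_mul hP_dense Xc hXc W hW_open hW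
end
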